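/- arXiv:0708.1685 — 7 statements merged into one kernel-verified Lean document; each statement's English description precedes it below -/
import Mathlib

section
/- Let n ≥ 1 and let r : ℂ⁴ → Mat_n(ℂ) ⊗ Mat_n(ℂ), written (v₁,v₂,y₁,y₂) ↦ r(v₁,v₂;y₁,y₂), satisfy the associative Yang–Baxter equation r(v₁,v₂;y₁,y₂)^{12} · r(v₁,v₃;y₂,y₃)^{23} = r(v₁,v₃;y₁,y₃)^{13} · r(v₃,v₂;y₁,y₂)^{12} + r(v₂,v₃;y₂,y₃)^{23} · r(v₁,v₂;y₁,y₃)^{13} for all v₁,v₂,v₃,y₁,y₂,y₃ ∈ ℂ, and the unitarity condition r(v₁,v₂;y₁,y₂) = −τ(r(v₂,v₁;y₂,y₁)) for all arguments. Then r also satisfies the dual equation r(v₂,v₃;y₂,y₃)^{23} · r(v₁,v₃;y₁,y₂)^{12} = r(v₁,v₂;y₁,y₂)^{12} · r(v₂,v₃;y₁,y₃)^{13} + r(v₁,v₃;y₁,y₃)^{13} · r(v₂,v₁;y₂,y₃)^{23} for all v₁,v₂,v₃,y₁,y₂,y₃ ∈ ℂ. -/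
/-!
The algebra automorphism `a ⊗ b ⊗ c ↦ c ⊗ b ⊗ a` of `Mat_n(ℂ)^{⊗3}` sends `x¹²`, `x¹³`, `x²³` to
`τ(x)²³`, `τ(x)¹³`, `τ(x)¹²`. Applying it to the associative Yang–Baxter equation at
`(v₃, v₂, v₁; y₃, y₂, y₁)` and rewriting each `τ(r(a, b; c, d))` as `-r(b, a; d, c)` by unitarity gives
the dual equation, the signs cancelling in pairs.
-/

open scoped TensorProduct

/-- `Mat_n(ℂ)`, the algebra of complex `n × n` matrices. -/
abbrev MatC (n : ℕ) : Type := Matrix (Fin n) (Fin n) ℂ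

/-- `r = Σ aᵢ ⊗ bᵢ ↦ r¹² = Σ aᵢ ⊗ bᵢ ⊗ 1` in `Mat_n(ℂ)^{⊗3}`. -/
noncomputable def leg12 (n : ℕ) :
    (MatC n ⊗[ℂ] MatC n) →ₐ[ℂ] (MatC n ⊗[ℂ] (MatC n ⊗[ℂ] MatC n)) :=
  Algebra.TensorProduct.map (AlgHom.id ℂ (MatC n))
    (Algebra.TensorProduct.includeLeft : MatC n →ₐ[ℂ] MatC n ⊗[ℂ] MatC n)

/-- `r = Σ aᵢ ⊗ bᵢ ↦ r¹³ = Σ aᵢ ⊗ 1 ⊗ bᵢ` in `Mat_n(ℂ)^{⊗3}`. -/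
noncomputable def leg13 (n : ℕ) :
    (MatC n ⊗[ℂ] MatC n) →ₐ[ℂ] (MatC n ⊗[ℂ] (MatC n ⊗[ℂ] MatC n)) :=
  Algebra.TensorProduct.map (AlgHom.id ℂ (MatC n))
    (Algebra.TensorProduct.includeRight : MatC n →ₐ[ℂ] MatC n ⊗[ℂ] MatC n)

/-- `r = Σ aᵢ ⊗ bᵢ ↦ r²³ = Σ 1 ⊗ aᵢ ⊗ bᵢ` in `Mat_n(ℂ)^{⊗3}`. -/
noncomputable def leg23 (n : ℕ) :
    (MatC n ⊗[ℂ] MatC n) →ₐ[ℂ] (MatC n ⊗[ℂ] (MatC n ⊗[ℂ] MatC n)) :=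
  Algebra.TensorProduct.includeRight

/-- The flip `τ(a ⊗ b) = b ⊗ a` of `Mat_n(ℂ) ⊗ Mat_n(ℂ)`. -/
noncomputable def tflip (n : ℕ) : (MatC n ⊗[ℂ] MatC n) ≃ₐ[ℂ] (MatC n ⊗[ℂ] MatC n) :=
  Algebra.TensorProduct.comm ℂ (MatC n) (MatC n)

section TensorReverse

variable (R A : Type*) [CommSemiring R] [Semiring A] [Algebra R A]

noncomputable def tensorReverse : A ⊗[R] (A ⊗[R] A) ≃ₐ[R] A ⊗[R] (A ⊗[R] A) :=
  (Algebra.TensorProduct.congr AlgEquiv.refl (Algebra.TensorProduct.comm R A A)).trans <|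
  (Algebra.TensorProduct.assoc R R R A A A).symm.trans <|
  (Algebra.TensorProduct.congr (Algebra.TensorProduct.comm R A A) AlgEquiv.refl).trans <|
  (Algebra.TensorProduct.assoc R R R A A A).trans <|
  Algebra.TensorProduct.congr AlgEquiv.refl (Algebra.TensorProduct.comm R A A)

@[simp]
lemma tensorReverse_tmul (a b c : A) :
    tensorReverse R A (a ⊗ₜ (b ⊗ₜ c)) = c ⊗ₜ (b ⊗ₜ a) := by
  simp [tensorReverse]

end TensorReverse

-- `neg_mul_neg` itself does not fire on `A ⊗[R] (B ⊗[R] C)`: the multiplication found there by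
-- instance search is not reducibly the one of the ring structure.
theorem tensorProduct_neg_mul_neg {R A B : Type*} [CommRing R] [Ring A] [Ring B] [Algebra R A]
    [Algebra R B] (x y : A ⊗[R] B) : -x * -y = x * y :=
  neg_mul_neg x y

section Legs

variable {n : ℕ}

lemma tflip_tflip (x : MatC n ⊗[ℂ] MatC n) : tflip n (tflip n x) = x :=
  TensorProduct.comm_comm ℂ (MatC n) (MatC n) x

lemma tensorReverse_leg12 (x : MatC n ⊗[ℂ] MatC n) :
    tensorReverse ℂ (MatC n) (leg12 n x) = leg23 n (tflip n x) := by
  induction x using TensorProduct.induction_on with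
  | zero => simp
  | tmul a b => simp [leg12, leg23, tflip]
  | add x y hx hy => simp only [map_add, hx, hy]

lemma tensorReverse_leg13 (x : MatC n ⊗[ℂ] MatC n) :
    tensorReverse ℂ (MatC n) (leg13 n x) = leg13 n (tflip n x) := by
  induction x using TensorProduct.induction_on with
  | zero => simp
  | tmul a b => simp [leg13, tflip]
  | add x y hx hy => simp only [map_add, hx, hy]

lemma tensorReverse_leg23 (x : MatC n ⊗[ℂ] MatC n) :
    tensorReverse ℂ (MatC n) (leg23 n x) = leg12 n (tflip n x) := by
  induction x using TensorProduct.induction_on with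
  | zero => simp
  | tmul a b => simp [leg12, leg23, tflip]
  | add x y hx hy => simp only [map_add, hx, hy]

end Legs

theorem unitary_AYBE_implies_dual_AYBE_general (n : ℕ)
    (r : ℂ → ℂ → ℂ → ℂ → MatC n ⊗[ℂ] MatC n)
    (hAYBE : ∀ v₁ v₂ v₃ y₁ y₂ y₃ : ℂ,
      leg12 n (r v₁ v₂ y₁ y₂) * leg23 n (r v₁ v₃ y₂ y₃) =
        leg13 n (r v₁ v₃ y₁ y₃) * leg12 n (r v₃ v₂ y₁ y₂) +
          leg23 n (r v₂ v₃ y₂ y₃) * leg13 n (r v₁ v₂ y₁ y₃))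
    (hunit : ∀ v₁ v₂ y₁ y₂ : ℂ,
      r v₁ v₂ y₁ y₂ = - tflip n (r v₂ v₁ y₂ y₁)) :
    ∀ v₁ v₂ v₃ y₁ y₂ y₃ : ℂ,
      leg23 n (r v₂ v₃ y₂ y₃) * leg12 n (r v₁ v₃ y₁ y₂) =
        leg12 n (r v₁ v₂ y₁ y₂) * leg13 n (r v₂ v₃ y₁ y₃) +
          leg13 n (r v₁ v₃ y₁ y₃) * leg23 n (r v₂ v₁ y₂ y₃) := by
  intro v₁ v₂ v₃ y₁ y₂ y₃
  have hflip (a b c d : ℂ) : tflip n (r a b c d) = -r b a d c := by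
    rw [hunit a b c d, map_neg, tflip_tflip]
  have h := congrArg (tensorReverse ℂ (MatC n)) (hAYBE v₃ v₂ v₁ y₃ y₂ y₁)
  simp only [map_mul, map_add, tensorReverse_leg12, tensorReverse_leg13, tensorReverse_leg23,
    hflip, map_neg, tensorProduct_neg_mul_neg] at h
  rw [h, add_comm]

/-- a unitary solution of the associative Yang–Baxter equation also
satisfies the "dual" associative Yang–Baxter equation. -/
theorem unitary_AYBE_implies_dual_AYBE (n : ℕ) (hn : 1 ≤ n)
    (r : ℂ → ℂ → ℂ → ℂ → MatC n ⊗[ℂ] MatC n)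
    (hAYBE : ∀ v₁ v₂ v₃ y₁ y₂ y₃ : ℂ,
      leg12 n (r v₁ v₂ y₁ y₂) * leg23 n (r v₁ v₃ y₂ y₃) =
        leg13 n (r v₁ v₃ y₁ y₃) * leg12 n (r v₃ v₂ y₁ y₂) +
          leg23 n (r v₂ v₃ y₂ y₃) * leg13 n (r v₁ v₂ y₁ y₃))
    (hunit : ∀ v₁ v₂ y₁ y₂ : ℂ,
      r v₁ v₂ y₁ y₂ = - tflip n (r v₂ v₁ y₂ y₁)) :
    ∀ v₁ v₂ v₃ y₁ y₂ y₃ : ℂ,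
      leg23 n (r v₂ v₃ y₂ y₃) * leg12 n (r v₁ v₃ y₁ y₂) =
        leg12 n (r v₁ v₂ y₁ y₂) * leg13 n (r v₂ v₃ y₁ y₃) +
          leg13 n (r v₁ v₃ y₁ y₃) * leg23 n (r v₂ v₁ y₂ y₃) :=
  unitary_AYBE_implies_dual_AYBE_general n r hAYBE hunit
end

section
/- Let n ≥ 1 and let r : ℂ³ → Mat_n(ℂ) ⊗ Mat_n(ℂ), written (v,y₁,y₂) ↦ r(v;y₁,y₂), satisfy for all u,v,y₁,y₂,y₃ ∈ ℂ the associative Yang–Baxter equation r(u;y₁,y₂)^{12} · r(u+v;y₂,y₃)^{23} = r(u+v;y₁,y₃)^{13} · r(−v;y₁,y₂)^{12} + r(v;y₂,y₃)^{23} · r(u;y₁,y₃)^{13}, together with the unitarity condition r(v;y₁,y₂) = −τ(r(−v;y₂,y₁)). Then for all u,v,y₁,y₂,y₃ ∈ ℂ the following commutator identity holds in Mat_n(ℂ)^{⊗3}: [r(−v;y₁,y₂)^{12}, r(u+v;y₁,y₃)^{13}] + [r(u;y₁,y₂)^{12}, r(u+v;y₂,y₃)^{23}] + [r(u;y₁,y₃)^{13},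 r(v;y₂,y₃)^{23}] = 0. -/
/-!
Permuting the first and third tensor legs turns `r¹²`, `r²³`, `r¹³` into `τ(r)²³`, `τ(r)¹²`,
`τ(r)¹³`. Applying this permutation to the AYBE at `(-(u+v), v; y₃, y₂, y₁)` and using
unitarity on every factor (the signs cancel in pairs) gives a reversed AYBE expressing
`r(u+v;y₂,y₃)²³ r(u;y₁,y₂)¹²`. Expanding the middle commutator with the AYBE and with its
reversed form, all terms of the identity cancel.
-/

open scoped TensorProduct

namespace Algebra.TensorProduct

variable (R A : Type*) [CommSemiring R] [Semiring A] [Algebra R A]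

noncomputable def swap13 : A ⊗[R] (A ⊗[R] A) ≃ₐ[R] A ⊗[R] (A ⊗[R] A) :=
  (congr .refl (TensorProduct.comm R A A)).trans <|
    (TensorProduct.assoc R R R A A A).symm.trans <|
      (congr (TensorProduct.comm R A A) .refl).trans <|
        (TensorProduct.assoc R R R A A A).trans <| congr .refl (TensorProduct.comm R A A)

variable {R A}

@[simp]
lemma swap13_tmul (a b c : A) : swap13 R A (a ⊗ₜ (b ⊗ₜ c)) = c ⊗ₜ (b ⊗ₜ a) := by
  simp [swap13]

end Algebra.TensorProduct

open Algebra.TensorProduct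

section

variable {n : ℕ}

lemma swap13_leg12 (x : MatC n ⊗[ℂ] MatC n) :
    swap13 ℂ (MatC n) (leg12 n x) = leg23 n (tflip n x) := by
  induction x using TensorProduct.induction_on with
  | zero => simp
  | tmul a b => simp [leg12, leg23, tflip]
  | add x y hx hy => simp only [map_add, hx, hy]

lemma swap13_leg23 (x : MatC n ⊗[ℂ] MatC n) :
    swap13 ℂ (MatC n) (leg23 n x) = leg12 n (tflip n x) := by
  induction x using TensorProduct.induction_on with
  | zero => simp
  | tmul a b => simp [leg12, leg23, tflip]
  | add x y hx hy => simp only [map_add, hx, hy]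

lemma swap13_leg13 (x : MatC n ⊗[ℂ] MatC n) :
    swap13 ℂ (MatC n) (leg13 n x) = leg13 n (tflip n x) := by
  induction x using TensorProduct.induction_on with
  | zero => simp
  | tmul a b => simp [leg13, tflip]
  | add x y hx hy => simp only [map_add, hx, hy]

-- Instance search does not find `HasDistribNeg` on this nested tensor product of matrix
-- algebras, so it is supplied by hand.
lemma neg_mul_neg_tripleTensor (x y : MatC n ⊗[ℂ] (MatC n ⊗[ℂ] MatC n)) : -x * -y = x * y :=
  @neg_mul_neg _ _ NonUnitalNonAssocRing.toHasDistribNeg x y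

lemma tflip_of_unitary {r : ℂ → ℂ → ℂ → MatC n ⊗[ℂ] MatC n}
    (hunit : ∀ v y₁ y₂ : ℂ, r v y₁ y₂ = - tflip n (r (-v) y₂ y₁)) (v y₁ y₂ : ℂ) :
    tflip n (r v y₁ y₂) = - r (-v) y₂ y₁ := by
  rw [hunit (-v), neg_neg, neg_neg]

lemma aybe_reversed_of_unitary {r : ℂ → ℂ → ℂ → MatC n ⊗[ℂ] MatC n}
    (hAYBE : ∀ u v y₁ y₂ y₃ : ℂ,
      leg12 n (r u y₁ y₂) * leg23 n (r (u + v) y₂ y₃) =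
        leg13 n (r (u + v) y₁ y₃) * leg12 n (r (-v) y₁ y₂) +
          leg23 n (r v y₂ y₃) * leg13 n (r u y₁ y₃))
    (hunit : ∀ v y₁ y₂ : ℂ, r v y₁ y₂ = - tflip n (r (-v) y₂ y₁)) (u v y₁ y₂ y₃ : ℂ) :
    leg23 n (r (u + v) y₂ y₃) * leg12 n (r u y₁ y₂) =
      leg13 n (r u y₁ y₃) * leg23 n (r v y₂ y₃) +
        leg12 n (r (-v) y₁ y₂) * leg13 n (r (u + v) y₁ y₃) := by
  have h := congrArg (swap13 ℂ (MatC n)) (hAYBE (-(u + v)) v y₃ y₂ y₁)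
  rw [show -(u + v) + v = -u by ring] at h
  simpa only [map_mul, map_add, swap13_leg12, swap13_leg23, swap13_leg13,
    tflip_of_unitary hunit, neg_neg, map_neg, neg_mul_neg_tripleTensor] using h

end

theorem unitary_AYBE_implies_commutator_identity_general (n : ℕ)
    (r : ℂ → ℂ → ℂ → MatC n ⊗[ℂ] MatC n)
    (hAYBE : ∀ u v y₁ y₂ y₃ : ℂ,
      leg12 n (r u y₁ y₂) * leg23 n (r (u + v) y₂ y₃) =
        leg13 n (r (u + v) y₁ y₃) * leg12 n (r (-v) y₁ y₂) +
          leg23 n (r v y₂ y₃) * leg13 n (r u y₁ y₃))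
    (hunit : ∀ v y₁ y₂ : ℂ, r v y₁ y₂ = - tflip n (r (-v) y₂ y₁)) :
    ∀ u v y₁ y₂ y₃ : ℂ,
      (leg12 n (r (-v) y₁ y₂) * leg13 n (r (u + v) y₁ y₃) -
          leg13 n (r (u + v) y₁ y₃) * leg12 n (r (-v) y₁ y₂)) +
        (leg12 n (r u y₁ y₂) * leg23 n (r (u + v) y₂ y₃) -
          leg23 n (r (u + v) y₂ y₃) * leg12 n (r u y₁ y₂)) +
        (leg13 n (r u y₁ y₃) * leg23 n (r v y₂ y₃) -
          leg23 n (r v y₂ y₃) * leg13 n (r u y₁ y₃)) = 0 := by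
  intro u v y₁ y₂ y₃
  rw [hAYBE u v y₁ y₂ y₃, aybe_reversed_of_unitary hAYBE hunit u v y₁ y₂ y₃]
  abel

/-- a unitary solution of the associative Yang–Baxter equation (in the
form with one "vector bundle" spectral parameter) satisfies the commutator identity
leading to the classical Yang–Baxter equation. -/
theorem unitary_AYBE_implies_commutator_identity (n : ℕ) (hn : 1 ≤ n)
    (r : ℂ → ℂ → ℂ → MatC n ⊗[ℂ] MatC n)
    (hAYBE : ∀ u v y₁ y₂ y₃ : ℂ,
      leg12 n (r u y₁ y₂) * leg23 n (r (u + v) y₂ y₃) =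
        leg13 n (r (u + v) y₁ y₃) * leg12 n (r (-v) y₁ y₂) +
          leg23 n (r v y₂ y₃) * leg13 n (r u y₁ y₃))
    (hunit : ∀ v y₁ y₂ : ℂ, r v y₁ y₂ = - tflip n (r (-v) y₂ y₁)) :
    ∀ u v y₁ y₂ y₃ : ℂ,
      (leg12 n (r (-v) y₁ y₂) * leg13 n (r (u + v) y₁ y₃) -
          leg13 n (r (u + v) y₁ y₃) * leg12 n (r (-v) y₁ y₂)) +
        (leg12 n (r u y₁ y₂) * leg23 n (r (u + v) y₂ y₃) -
          leg23 n (r (u + v) y₂ y₃) * leg12 n (r u y₁ y₂)) +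
        (leg13 n (r u y₁ y₃) * leg23 n (r v y₂ y₃) -
          leg23 n (r v y₂ y₃) * leg13 n (r u y₁ y₃)) = 0 :=
  unitary_AYBE_implies_commutator_identity_general n r hAYBE hunit
end

section
/- (Commutativity of Dunkl operators attached to a unitary solution of the associative Yang–Baxter equation, operator form.) Let R be an associative unital ring, m ≥ 2 an integer, and let D₁,…,D_m ∈ R and ρ_{ij} ∈ R for all 1 ≤ i ≠ j ≤ m satisfy: (i) D_i D_j = D_j D_i for all i,j; (ii) ρ_{ij} = −ρ_{ji} for all i ≠ j; (iii) [D_i + D_j, ρ_{ij}] = 0 for all i ≠ j; (iv) [D_i, ρ_{kl}] = 0 whenever i ∉ {k,l}; (v) [ρ_{ij}, ρ_{kl}] = 0 whenever {i,j} ∩ {k,l} = ∅; (vi) for all pairwise distinct i,j,k: ρ_{ij} ρ_{jk} = ρ_{jk} ρ_{ik} + ρ_{ik} ρ_{ij} and ρ_{jk} ρ_{ij} = ρ_{ik} ρ_{jk} + ρ_{ij} ρ_{ik}. Then the Dunkl operators θ_i := D_i + Σ_{j≠i} ρ_{ij} (1 ≤ i ≤ m) pairwise commute: θ_i θ_j =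 θ_j θ_i for all i,j. -/
/-- commutativity of Dunkl operators attached to a unitary solution of
the associative Yang–Baxter equation, operator form.  In an associative unital ring
`R`, given pairwise commuting elements `D i` and elements `ρ i j` (for `i ≠ j`)
satisfying the listed relations, the Dunkl operators `θ i = D i + Σ_{j ≠ i} ρ i j`
pairwise commute. -/
theorem dunkl_operators_commute (R : Type*) [Ring R] (m : ℕ) (hm : 2 ≤ m)
    (D : Fin m → R) (ρ : Fin m → Fin m → R)
    (hD : ∀ i j : Fin m, D i * D j = D j * D i)
    (hskew : ∀ i j : Fin m, i ≠ j → ρ i j = - ρ j i)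
    (hDpair : ∀ i j : Fin m, i ≠ j → (D i + D j) * ρ i j = ρ i j * (D i + D j))
    (hDdisj : ∀ i k l : Fin m, k ≠ l → i ≠ k → i ≠ l → D i * ρ k l = ρ k l * D i)
    (hρdisj : ∀ i j k l : Fin m, i ≠ j → k ≠ l → i ≠ k → i ≠ l → j ≠ k → j ≠ l →
      ρ i j * ρ k l = ρ k l * ρ i j)
    (hYB : ∀ i j k : Fin m, i ≠ j → j ≠ k → i ≠ k →
      ρ i j * ρ j k = ρ j k * ρ i k + ρ i k * ρ i j ∧
      ρ j k * ρ i j = ρ i k * ρ j k + ρ i j * ρ i k) :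
    ∀ i j : Fin m,
      (D i + ∑ k ∈ Finset.univ.erase i, ρ i k) * (D j + ∑ k ∈ Finset.univ.erase j, ρ j k) =
        (D j + ∑ k ∈ Finset.univ.erase j, ρ j k) * (D i + ∑ k ∈ Finset.univ.erase i, ρ i k) := by
  intro i j
  rcases eq_or_ne i j with rfl | hij
  · rfl
  have hji : j ≠ i := hij.symm
  set T : Finset (Fin m) := (Finset.univ.erase j).erase i with hTdef
  have hiT : i ∉ T := Finset.notMem_erase i _
  have hjT : j ∉ T := by
    rw [hTdef, Finset.mem_erase, Finset.mem_erase]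
    tauto
  have hmem : ∀ k ∈ T, k ≠ i ∧ k ≠ j := by
    intro k hk
    rw [hTdef, Finset.mem_erase, Finset.mem_erase] at hk
    exact ⟨hk.1, hk.2.1⟩
  have h1 : Finset.univ.erase i = insert j T := by
    rw [hTdef, Finset.erase_right_comm]
    exact (Finset.insert_erase (by simp [hji])).symm
  have h2 : Finset.univ.erase j = insert i T := by
    rw [hTdef]
    exact (Finset.insert_erase (by simp [hij])).symm
  rw [h1, h2, Finset.sum_insert hjT, Finset.sum_insert hiT, hskew j i hji]
  set A : R := ∑ k ∈ T, ρ i k with hA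
  set B : R := ∑ k ∈ T, ρ j k with hB
  -- the individual vanishing commutators
  have z1 : D i * D j - D j * D i = 0 := sub_eq_zero.mpr (hD i j)
  have z2 : D i * B - B * D i = 0 := by
    refine sub_eq_zero.mpr ?_
    rw [hB, Finset.mul_sum, Finset.sum_mul]
    refine Finset.sum_congr rfl fun k hk => ?_
    obtain ⟨hki, hkj⟩ := hmem k hk
    exact hDdisj i j k hkj.symm hij hki.symm
  have z3 : A * D j - D j * A = 0 := by
    refine sub_eq_zero.mpr ?_
    rw [hA, Finset.mul_sum, Finset.sum_mul]
    refine (Finset.sum_congr rfl fun k hk => ?_).symm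
    obtain ⟨hki, hkj⟩ := hmem k hk
    exact hDdisj j i k hki.symm hji hkj.symm
  have z4 : ρ i j * (D i + D j) - (D i + D j) * ρ i j = 0 :=
    sub_eq_zero.mpr (hDpair i j hij).symm
  have zAB : A * B - B * A = ∑ k ∈ T, (ρ i k * ρ j k - ρ j k * ρ i k) := by
    rw [hA, hB, Finset.sum_mul_sum, Finset.sum_mul_sum, Finset.sum_comm (s := T) (t := T),
      ← Finset.sum_sub_distrib]
    refine Finset.sum_congr rfl fun k hk => ?_
    rw [← Finset.sum_sub_distrib]
    refine Finset.sum_eq_single_of_mem k hk fun l hl hlk => ?_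
    obtain ⟨hki, hkj⟩ := hmem k hk
    obtain ⟨hli, hlj⟩ := hmem l hl
    rw [hρdisj i l j k hli.symm hkj.symm hij hki.symm hlj hlk, sub_self]
  have zpB : ρ i j * B - B * ρ i j = ∑ k ∈ T, (ρ i j * ρ j k - ρ j k * ρ i j) := by
    rw [hB, Finset.mul_sum, Finset.sum_mul, Finset.sum_sub_distrib]
  have zAp : A * (-ρ i j) - (-ρ i j) * A =
      ∑ k ∈ T, (ρ i k * (-ρ i j) - (-ρ i j) * ρ i k) := by
    rw [hA, Finset.mul_sum, Finset.sum_mul, Finset.sum_sub_distrib]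
  have z5 : (ρ i j * B - B * ρ i j) + (A * (-ρ i j) - (-ρ i j) * A) + (A * B - B * A) = 0 := by
    rw [zpB, zAp, zAB, ← Finset.sum_add_distrib, ← Finset.sum_add_distrib]
    refine Finset.sum_eq_zero fun k hk => ?_
    obtain ⟨hki, hkj⟩ := hmem k hk
    obtain ⟨yb1, yb2⟩ := hYB i j k hij hkj.symm hki.symm
    rw [yb1, yb2]
    noncomm_ring
  have expand :
      (D i + (ρ i j + A)) * (D j + (-ρ i j + B)) - (D j + (-ρ i j + B)) * (D i + (ρ i j + A)) =
        (D i * D j - D j * D i) + (D i * B - B * D i) + (A * D j - D j * A) +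
          (ρ i j * (D i + D j) - (D i + D j) * ρ i j) +
          ((ρ i j * B - B * ρ i j) + (A * (-ρ i j) - (-ρ i j) * A) + (A * B - B * A)) := by
    noncomm_ring
  have : (D i + (ρ i j + A)) * (D j + (-ρ i j + B)) -
      (D j + (-ρ i j + B)) * (D i + (ρ i j + A)) = 0 := by
    rw [expand, z1, z2, z3, z4, z5]; simp
  exact sub_eq_zero.mp this
end

section
/- Let n₁, n₂ ≥ 1 and let M be a simple object of the nodal matrix problem MP_nd(n₁,n₂), i.e. an invertible complex (n₁+n₂)×(n₁+n₂) matrix, with block decomposition M = [[M₁₁,M₁₂],[M₂₁,M₂₂]], all of whose endomorphisms are scalar. Then the block M₁₂ has full rank: rank(M₁₂) = min(n₁,n₂). -/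
open Matrix

/-- If the matrix-vector map of a matrix is injective, its rank equals the width. -/
lemma rank_eq_width_of_inj {m n : ℕ} (A : Matrix (Fin m) (Fin n) ℂ)
    (h : ∀ v : Fin n → ℂ, A *ᵥ v = 0 → v = 0) : A.rank = n := by
  have hinj : Function.Injective A.mulVecLin := by
    rw [← LinearMap.ker_eq_bot, LinearMap.ker_eq_bot']
    intro v hv
    exact h v hv
  rw [Matrix.rank, LinearMap.finrank_range_of_inj hinj]
  simp [Module.finrank_pi]

/-- in the nodal matrix problem `MP_nd(n₁,n₂)`, the block `M₁₂` of a
simple object (an invertible block matrix all of whose endomorphisms are scalar)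
has full rank `min n₁ n₂`. -/
theorem nodal_simple_implies_block_full_rank (n₁ n₂ : ℕ) (h₁ : 1 ≤ n₁) (h₂ : 1 ≤ n₂)
    (M₁₁ : Matrix (Fin n₁) (Fin n₁) ℂ) (M₁₂ : Matrix (Fin n₁) (Fin n₂) ℂ)
    (M₂₁ : Matrix (Fin n₂) (Fin n₁) ℂ) (M₂₂ : Matrix (Fin n₂) (Fin n₂) ℂ)
    (hinv : IsUnit (Matrix.fromBlocks M₁₁ M₁₂ M₂₁ M₂₂))
    (hsimple : ∀ (A : Matrix (Fin n₁) (Fin n₁) ℂ) (B : Matrix (Fin n₂) (Fin n₂) ℂ)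
      (C' C'' : Matrix (Fin n₂) (Fin n₁) ℂ),
      Matrix.fromBlocks A 0 C' B * Matrix.fromBlocks M₁₁ M₁₂ M₂₁ M₂₂ =
          Matrix.fromBlocks M₁₁ M₁₂ M₂₁ M₂₂ * Matrix.fromBlocks A 0 C'' B →
        ∃ c : ℂ,
          Matrix.fromBlocks A 0 C' B =
            c • (1 : Matrix (Fin n₁ ⊕ Fin n₂) (Fin n₁ ⊕ Fin n₂) ℂ) ∧
          Matrix.fromBlocks A 0 C'' B =
            c • (1 : Matrix (Fin n₁ ⊕ Fin n₂) (Fin n₁ ⊕ Fin n₂) ℂ)) :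
    M₁₂.rank = min n₁ n₂ := by
  refine le_antisymm (le_min (by simpa using M₁₂.rank_le_card_height)
    (by simpa using M₁₂.rank_le_card_width)) ?_
  by_cases hv : ∃ v : Fin n₂ → ℂ, v ≠ 0 ∧ M₁₂ *ᵥ v = 0
  · by_cases hu : ∃ u : Fin n₁ → ℂ, u ≠ 0 ∧ u ᵥ* M₁₂ = 0
    · -- both kernels nontrivial: construct a nonscalar endomorphism, contradiction
      exfalso
      obtain ⟨v, hv0, hvk⟩ := hv
      obtain ⟨u, hu0, huk⟩ := hu
      set C' : Matrix (Fin n₂) (Fin n₁) ℂ := vecMulVec (M₂₂ *ᵥ v) u with hC'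
      set C'' : Matrix (Fin n₂) (Fin n₁) ℂ := vecMulVec v (u ᵥ* M₁₁) with hC''
      have hend : Matrix.fromBlocks 0 0 C' 0 * Matrix.fromBlocks M₁₁ M₁₂ M₂₁ M₂₂ =
          Matrix.fromBlocks M₁₁ M₁₂ M₂₁ M₂₂ * Matrix.fromBlocks 0 0 C'' 0 := by
        rw [Matrix.fromBlocks_multiply, Matrix.fromBlocks_multiply]
        have e1 : M₁₂ * C'' = 0 := by
          ext i j
          simp only [hC'', Matrix.mul_apply, vecMulVec_apply, Matrix.zero_apply]
          have hz : ∑ k, M₁₂ i k * v k = 0 := by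
            simpa [Matrix.mulVec, dotProduct] using congrFun hvk i
          calc ∑ k, M₁₂ i k * (v k * (u ᵥ* M₁₁) j)
              = (∑ k, M₁₂ i k * v k) * (u ᵥ* M₁₁) j := by
                rw [Finset.sum_mul]; exact Finset.sum_congr rfl fun k _ => by ring
            _ = 0 := by rw [hz]; ring
        have e2 : C' * M₁₂ = 0 := by
          ext i j
          simp only [hC', Matrix.mul_apply, vecMulVec_apply, Matrix.zero_apply]
          have hz : ∑ k, u k * M₁₂ k j = 0 := by
            simpa [Matrix.vecMul, dotProduct] using congrFun huk j
          calc ∑ k, (M₂₂ *ᵥ v) i * u k * M₁₂ k j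
              = (M₂₂ *ᵥ v) i * ∑ k, u k * M₁₂ k j := by
                rw [Finset.mul_sum]; exact Finset.sum_congr rfl fun k _ => by ring
            _ = 0 := by rw [hz]; ring
        have e3 : C' * M₁₁ = M₂₂ * C'' := by
          ext i j
          simp only [hC', hC'', Matrix.mul_apply, vecMulVec_apply]
          simp only [Matrix.mulVec, Matrix.vecMul, dotProduct]
          simp only [Finset.sum_mul, Finset.mul_sum]
          rw [Finset.sum_comm]
          exact Finset.sum_congr rfl fun k _ =>
            Finset.sum_congr rfl fun l _ => by ring
        rw [e1, e2, e3]
        simp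
      obtain ⟨c, hS, hT⟩ := hsimple 0 0 C' C'' hend
      have hc : c = 0 := by
        have := congrFun (congrFun hS (Sum.inl ⟨0, h₁⟩)) (Sum.inl ⟨0, h₁⟩)
        simpa using this.symm
      have hC0 : C'' = 0 := by
        ext i j
        have := congrFun (congrFun hT (Sum.inr i)) (Sum.inl j)
        simpa [hc] using this
      -- from C'' = 0 and v ≠ 0 deduce u ᵥ* M₁₁ = 0
      obtain ⟨i, hi⟩ := Function.ne_iff.mp hv0
      have huM : u ᵥ* M₁₁ = 0 := by
        ext j
        have := congrFun (congrFun hC0 i) j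
        simp only [hC'', vecMulVec_apply, Matrix.zero_apply] at this
        show (u ᵥ* M₁₁) j = 0
        exact (mul_eq_zero.mp this).resolve_left hi
      -- then the row vector (u, 0) kills the invertible matrix M
      set w : Fin n₁ ⊕ Fin n₂ → ℂ := Sum.elim u 0 with hw
      have hwM : w ᵥ* Matrix.fromBlocks M₁₁ M₁₂ M₂₁ M₂₂ = 0 := by
        rw [Matrix.vecMul_fromBlocks]
        have : (w ∘ Sum.inl) = u := rfl
        have h0 : (w ∘ Sum.inr) = (0 : Fin n₂ → ℂ) := rfl
        rw [this, h0]
        simp [huM, huk]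
      obtain ⟨U, hU⟩ := hinv
      have hw0 : w = 0 := by
        have h1 : (Matrix.fromBlocks M₁₁ M₁₂ M₂₁ M₂₂) * (↑U⁻¹ : Matrix _ _ ℂ) = 1 := by
          rw [← hU]; exact U.mul_inv
        calc w = w ᵥ* ((Matrix.fromBlocks M₁₁ M₁₂ M₂₁ M₂₂) * ↑U⁻¹) := by
              rw [h1, Matrix.vecMul_one]
          _ = (w ᵥ* Matrix.fromBlocks M₁₁ M₁₂ M₂₁ M₂₂) ᵥ* ↑U⁻¹ := by
              rw [Matrix.vecMul_vecMul]
          _ = 0 := by rw [hwM]; simp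
      exact hu0 (by ext j; exact congrFun hw0 (Sum.inl j))
    · -- left kernel trivial: rank = n₁
      push_neg at hu
      have : M₁₂ᵀ.rank = n₁ := by
        apply rank_eq_width_of_inj
        intro x hx
        by_contra hx0
        exact hu x hx0 (by rw [← Matrix.mulVec_transpose]; exact hx)
      calc min n₁ n₂ ≤ n₁ := min_le_left _ _
        _ = M₁₂ᵀ.rank := this.symm
        _ = M₁₂.rank := Matrix.rank_transpose M₁₂
  · -- right kernel trivial: rank = n₂
    push_neg at hv
    have : M₁₂.rank = n₂ := by
      apply rank_eq_width_of_inj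
      intro x hx
      by_contra hx0
      exact hx0 (hv x hx0 hx).elim
    rw [this]
    exact min_le_right _ _
end

section
/- Let n₁, n₂ ≥ 1 and let (M₁₁, M₁₂, M₂₂) be a simple object of the cuspidal matrix problem MP_cp(n₁,n₂). Then the block M₁₂ has full rank: rank(M₁₂) = min(n₁,n₂). -/
/-! If `M₁₂` dropped rank, it would have nonzero vectors `v`, `u` with `M₁₂ v = 0` and
`uᵀ M₁₂ = 0`; then `(0, v uᵀ, 0)` is an endomorphism which is not scalar. -/

namespace Matrix

variable {m n K : Type*} [Fintype n] [Field K]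

theorem exists_mulVec_eq_zero_of_rank_lt_card_width (A : Matrix m n K)
    (h : A.rank < Fintype.card n) : ∃ v ≠ 0, A *ᵥ v = 0 := by
  by_contra! hA
  have hinj : Function.Injective A.mulVecLin :=
    LinearMap.ker_eq_bot.mp <| ker_mulVecLin_eq_bot_iff.mpr fun v hv ↦
      by_contra fun hv0 ↦ hA v hv0 hv
  simp [rank, LinearMap.finrank_range_of_inj hinj] at h

theorem exists_vecMul_eq_zero_of_rank_lt_card_height [Fintype m] (A : Matrix m n K)
    (h : A.rank < Fintype.card m) : ∃ u ≠ 0, u ᵥ* A = 0 := by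
  simpa only [mulVec_transpose] using
    Aᵀ.exists_mulVec_eq_zero_of_rank_lt_card_width (by rwa [rank_transpose])

theorem rank_eq_min_of_forall_mul_eq_zero [Fintype m] (A : Matrix m n K)
    (h : ∀ S : Matrix n m K, A * S = 0 → S * A = 0 → S = 0) :
    A.rank = min (Fintype.card m) (Fintype.card n) := by
  refine le_antisymm (le_min A.rank_le_card_height A.rank_le_card_width) ?_
  by_contra! hlt
  obtain ⟨v, hv, hAv⟩ :=
    A.exists_mulVec_eq_zero_of_rank_lt_card_width (hlt.trans_le (min_le_right _ _))
  obtain ⟨u, hu, huA⟩ :=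
    A.exists_vecMul_eq_zero_of_rank_lt_card_height (hlt.trans_le (min_le_left _ _))
  have hvu := h (vecMulVec v u) (by rw [mul_vecMulVec, hAv, zero_vecMulVec])
    (by rw [vecMulVec_mul, huA, vecMulVec_zero])
  obtain ⟨i, hi⟩ := Function.ne_iff.mp hv
  obtain ⟨j, hj⟩ := Function.ne_iff.mp hu
  exact mul_ne_zero hi hj congr($hvu i j)

end Matrix

theorem cuspidal_simple_implies_block_full_rank_general (n₁ n₂ : ℕ)
    (M₁₁ : Matrix (Fin n₁) (Fin n₁) ℂ) (M₁₂ : Matrix (Fin n₁) (Fin n₂) ℂ)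
    (M₂₂ : Matrix (Fin n₂) (Fin n₂) ℂ)
    (hsimple : ∀ (S₁₁ : Matrix (Fin n₁) (Fin n₁) ℂ) (S₂₁ : Matrix (Fin n₂) (Fin n₁) ℂ)
      (S₂₂ : Matrix (Fin n₂) (Fin n₂) ℂ),
      S₁₁ * M₁₁ = M₁₁ * S₁₁ + M₁₂ * S₂₁ →
      S₁₁ * M₁₂ = M₁₂ * S₂₂ →
      S₂₁ * M₁₂ + S₂₂ * M₂₂ = M₂₂ * S₂₂ →
        ∃ c : ℂ, S₁₁ = c • (1 : Matrix (Fin n₁) (Fin n₁) ℂ) ∧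
          S₂₂ = c • (1 : Matrix (Fin n₂) (Fin n₂) ℂ) ∧ S₂₁ = 0) :
    M₁₂.rank = min n₁ n₂ := by
  have hend : ∀ S : Matrix (Fin n₂) (Fin n₁) ℂ, M₁₂ * S = 0 → S * M₁₂ = 0 → S = 0 :=
    fun S hMS hSM ↦ (hsimple 0 S 0 (by simp [hMS]) (by simp) (by simp [hSM])).choose_spec.2.2
  simpa using M₁₂.rank_eq_min_of_forall_mul_eq_zero hend

/-- in the cuspidal matrix problem `MP_cp(n₁,n₂)`, the block `M₁₂` of a
simple object has full rank `min n₁ n₂`. -/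
theorem cuspidal_simple_implies_block_full_rank (n₁ n₂ : ℕ) (h₁ : 1 ≤ n₁) (h₂ : 1 ≤ n₂)
    (M₁₁ : Matrix (Fin n₁) (Fin n₁) ℂ) (M₁₂ : Matrix (Fin n₁) (Fin n₂) ℂ)
    (M₂₂ : Matrix (Fin n₂) (Fin n₂) ℂ)
    (hsimple : ∀ (S₁₁ : Matrix (Fin n₁) (Fin n₁) ℂ) (S₂₁ : Matrix (Fin n₂) (Fin n₁) ℂ)
      (S₂₂ : Matrix (Fin n₂) (Fin n₂) ℂ),
      S₁₁ * M₁₁ = M₁₁ * S₁₁ + M₁₂ * S₂₁ →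
      S₁₁ * M₁₂ = M₁₂ * S₂₂ →
      S₂₁ * M₁₂ + S₂₂ * M₂₂ = M₂₂ * S₂₂ →
        ∃ c : ℂ, S₁₁ = c • (1 : Matrix (Fin n₁) (Fin n₁) ℂ) ∧
          S₂₂ = c • (1 : Matrix (Fin n₂) (Fin n₂) ℂ) ∧ S₂₁ = 0) :
    M₁₂.rank = min n₁ n₂ :=
  cuspidal_simple_implies_block_full_rank_general n₁ n₂ M₁₁ M₁₂ M₂₂ hsimple
end

section
/- For every integer m ≥ 2 the nodal matrix problem MP_nd(m,m) has no simple objects: for every invertible complex 2m×2m matrix M (with block decomposition into four m×m blocks) there exists an endomorphism (S,T) of M such that there is no c ∈ ℂ with S = c·Id and T = c·Id. -/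
open Matrix

private lemma aux_fromBlocks_congr {k : ℕ} {A A' B B' C C' D D' : Matrix (Fin k) (Fin k) ℂ}
    (h1 : A = A') (h2 : B = B') (h3 : C = C') (h4 : D = D') :
    Matrix.fromBlocks A B C D = Matrix.fromBlocks A' B' C' D' := by
  rw [h1, h2, h3, h4]

private lemma aux_mul_vecMulVec {k : ℕ} (B : Matrix (Fin k) (Fin k) ℂ) (x w : Fin k → ℂ) :
    B * Matrix.vecMulVec x w = Matrix.vecMulVec (B *ᵥ x) w := by
  ext i j
  simp [Matrix.mul_apply, Matrix.vecMulVec_apply, Matrix.mulVec, dotProduct,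
    Finset.sum_mul, mul_assoc]

private lemma aux_vecMulVec_mul {k : ℕ} (B : Matrix (Fin k) (Fin k) ℂ) (x w : Fin k → ℂ) :
    Matrix.vecMulVec x w * B = Matrix.vecMulVec x (w ᵥ* B) := by
  ext i j
  simp [Matrix.mul_apply, Matrix.vecMulVec_apply, Matrix.vecMul, dotProduct,
    Finset.mul_sum, mul_assoc]

private lemma aux_vecMulVec_zero_left {k : ℕ} (w : Fin k → ℂ) :
    Matrix.vecMulVec (0 : Fin k → ℂ) w = 0 := by
  ext i j; simp [Matrix.vecMulVec_apply]

private lemma aux_vecMulVec_zero_right {k : ℕ} (x : Fin k → ℂ) :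
    Matrix.vecMulVec x (0 : Fin k → ℂ) = 0 := by
  ext i j; simp [Matrix.vecMulVec_apply]

private lemma aux_scalar_block {k : ℕ} {A C B : Matrix (Fin k) (Fin k) ℂ} {c : ℂ}
    (h : Matrix.fromBlocks A 0 C B = c • 1) : A = c • 1 ∧ C = 0 := by
  constructor
  · ext i j
    have := congrFun (congrFun h (Sum.inl i)) (Sum.inl j)
    simpa [Matrix.one_apply] using this
  · ext i j
    have := congrFun (congrFun h (Sum.inr i)) (Sum.inl j)
    simpa using this

/-- for `m ≥ 2` the nodal matrix problem `MP_nd(m,m)` has no simple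
objects: every invertible `2m × 2m` complex matrix admits a non-scalar
endomorphism. -/
theorem nodal_no_simple_objects (m : ℕ) (hm : 2 ≤ m)
    (M : Matrix (Fin m ⊕ Fin m) (Fin m ⊕ Fin m) ℂ) (hM : IsUnit M) :
    ∃ (A B C' C'' : Matrix (Fin m) (Fin m) ℂ),
      Matrix.fromBlocks A 0 C' B * M = M * Matrix.fromBlocks A 0 C'' B ∧
      ¬ ∃ c : ℂ,
          Matrix.fromBlocks A 0 C' B =
            c • (1 : Matrix (Fin m ⊕ Fin m) (Fin m ⊕ Fin m) ℂ) ∧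
          Matrix.fromBlocks A 0 C'' B =
            c • (1 : Matrix (Fin m ⊕ Fin m) (Fin m ⊕ Fin m) ℂ) := by
  obtain ⟨i0, i1, hne⟩ : ∃ i0 i1 : Fin m, i0 ≠ i1 :=
    ⟨⟨0, by omega⟩, ⟨1, by omega⟩, by simp [Fin.ext_iff]⟩
  set M11 := M.toBlocks₁₁ with hM11
  set M12 := M.toBlocks₁₂ with hM12
  set M21 := M.toBlocks₂₁ with hM21
  set M22 := M.toBlocks₂₂ with hM22
  have hMb : M = Matrix.fromBlocks M11 M12 M21 M22 := (Matrix.fromBlocks_toBlocks M).symm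
  by_cases h12 : IsUnit M12.det
  · -- M₁₂ invertible
    set Q := M12⁻¹ with hQdef
    have hPQ : M12 * Q = 1 := Matrix.mul_nonsing_inv _ h12
    have hQP : Q * M12 = 1 := Matrix.nonsing_inv_mul _ h12
    have hPQ' : ∀ X : Matrix (Fin m) (Fin m) ℂ, M12 * (Q * X) = X := fun X => by
      rw [← mul_assoc, hPQ, one_mul]
    have hQP' : ∀ X : Matrix (Fin m) (Fin m) ℂ, Q * (M12 * X) = X := fun X => by
      rw [← mul_assoc, hQP, one_mul]
    set N := M12 * M21 - M12 * (M22 * (Q * M11)) with hN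
    obtain ⟨A, hAN, hAns⟩ :
        ∃ A : Matrix (Fin m) (Fin m) ℂ, A * N = N * A ∧ ∀ c : ℂ, A ≠ c • 1 := by
      by_cases hNs : ∃ c : ℂ, N = c • 1
      · obtain ⟨c, hc⟩ := hNs
        refine ⟨Matrix.single i0 i1 1, ?_, ?_⟩
        · rw [hc, mul_smul_comm, smul_mul_assoc, mul_one, one_mul]
        · intro c' hc'
          have := congrFun (congrFun hc' i0) i1
          simp [Matrix.single_apply_same, Matrix.one_apply, hne] at this
      · exact ⟨N, rfl, fun c hc => hNs ⟨c, hc⟩⟩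
    refine ⟨A, Q * (A * M12), M22 * (Q * A) - Q * (A * (M12 * (M22 * Q))),
      Q * (A * M11 - M11 * A), ?_, ?_⟩
    · rw [hMb, Matrix.fromBlocks_multiply, Matrix.fromBlocks_multiply]
      apply aux_fromBlocks_congr
      · simp only [zero_mul, add_zero, mul_sub, mul_zero, zero_add, mul_assoc, hPQ', hQP',
          hPQ, hQP, mul_one, one_mul]
        abel
      · simp only [zero_mul, add_zero, mul_zero, zero_add, mul_sub, sub_mul, mul_assoc,
          hPQ', hQP', hPQ, hQP, mul_one, one_mul]
      · have key : (M22 * (Q * A) - Q * (A * (M12 * (M22 * Q)))) * M11 + Q * (A * M12) * M21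
            - (M21 * A + M22 * (Q * (A * M11 - M11 * A))) = Q * (A * N - N * A) := by
          simp only [hN, mul_sub, sub_mul, mul_assoc, hPQ', hQP', hPQ, hQP, mul_one, one_mul]
          abel
        have h0 : (M22 * (Q * A) - Q * (A * (M12 * (M22 * Q)))) * M11 + Q * (A * M12) * M21
            - (M21 * A + M22 * (Q * (A * M11 - M11 * A))) = 0 := by
          rw [key, hAN, sub_self, mul_zero]
        exact sub_eq_zero.mp h0
      · simp only [mul_zero, zero_add, mul_sub, sub_mul, mul_assoc, hPQ', hQP', hPQ, hQP,
          mul_one, one_mul]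
        abel
    · rintro ⟨c, hS, _⟩
      exact hAns c (aux_scalar_block hS).1
  · -- M₁₂ singular
    have hdet : M12.det = 0 := by
      by_contra h
      exact h12 (isUnit_iff_ne_zero.mpr h)
    obtain ⟨x, hx0, hx⟩ := Matrix.exists_mulVec_eq_zero_iff.mpr hdet
    obtain ⟨w, hw0, hw⟩ := Matrix.exists_vecMul_eq_zero_iff.mpr hdet
    have hwM11 : w ᵥ* M11 ≠ 0 := by
      intro hz
      set v : Fin m ⊕ Fin m → ℂ := Sum.elim w 0 with hv
      have hvM : v ᵥ* M = 0 := by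
        ext j
        cases j with
        | inl j =>
          have h1 := congrFun hz j
          simpa [Matrix.vecMul, dotProduct, Fintype.sum_sum_type, hv, hM11,
            Matrix.toBlocks₁₁] using h1
        | inr j =>
          have h2 := congrFun hw j
          simpa [Matrix.vecMul, dotProduct, Fintype.sum_sum_type, hv, hM12,
            Matrix.toBlocks₁₂] using h2
      have hMdet : IsUnit M.det := (Matrix.isUnit_iff_isUnit_det M).mp hM
      have hv0 : v = 0 := by
        have h3 := congrArg (fun u => u ᵥ* M⁻¹) hvM
        simpa [Matrix.vecMul_vecMul, Matrix.mul_nonsing_inv _ hMdet] using h3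
      apply hw0
      ext i
      exact congrFun hv0 (Sum.inl i)
    obtain ⟨j0, hj0⟩ := Function.ne_iff.mp hwM11
    obtain ⟨i0', hi0'⟩ := Function.ne_iff.mp hx0
    refine ⟨0, 0, M22 * Matrix.vecMulVec x w, Matrix.vecMulVec x (w ᵥ* M11), ?_, ?_⟩
    · rw [hMb, Matrix.fromBlocks_multiply, Matrix.fromBlocks_multiply]
      apply aux_fromBlocks_congr
      · rw [aux_mul_vecMulVec, hx, aux_vecMulVec_zero_left]
        simp
      · simp
      · rw [mul_assoc, aux_vecMulVec_mul]
        simp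
      · rw [mul_assoc, aux_vecMulVec_mul, hw, aux_vecMulVec_zero_right]
        simp
    · rintro ⟨c, _, hT⟩
      have hC := (aux_scalar_block hT).2
      have := congrFun (congrFun hC i0') j0
      simp [Matrix.vecMulVec_apply] at this
      exact this.elim (fun h => hi0' h) (fun h => hj0 h)
end

section
/- For every integer m ≥ 2 the cuspidal matrix problem MP_cp(m,m) has no simple objects: for every triple of complex m×m matrices (M₁₁, M₁₂, M₂₂) there exists an endomorphism (S₁₁,S₂₁,S₂₂) of (M₁₁,M₁₂,M₂₂) such that there is no c ∈ ℂ with S₁₁ = c·Id, S₂₂ = c·Id and S₂₁ = 0. -/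
/-- For `m ≥ 2` every square matrix over ℂ commutes with some non-scalar matrix. -/
lemma exists_nonscalar_commuting (m : ℕ) (hm : 2 ≤ m) (B : Matrix (Fin m) (Fin m) ℂ) :
    ∃ U : Matrix (Fin m) (Fin m) ℂ, U * B = B * U ∧
      ¬ ∃ c : ℂ, U = c • (1 : Matrix (Fin m) (Fin m) ℂ) := by
  have h0 : (0 : ℕ) < m := by omega
  have h1 : (1 : ℕ) < m := by omega
  by_cases hB : ∃ c : ℂ, B = c • (1 : Matrix (Fin m) (Fin m) ℂ)
  · refine ⟨Matrix.single ⟨0, h0⟩ ⟨1, h1⟩ 1, ?_, ?_⟩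
    · obtain ⟨c, rfl⟩ := hB
      simp [Matrix.mul_smul, Matrix.smul_mul]
    · rintro ⟨c, hc⟩
      have h01 : (⟨0, h0⟩ : Fin m) ≠ ⟨1, h1⟩ := by simp [Fin.ext_iff]
      have e1 := congrArg (fun M => M ⟨0, h0⟩ ⟨1, h1⟩) hc
      simp [Matrix.single, Matrix.one_apply, h01] at e1
  · exact ⟨B, rfl, hB⟩

/-- for `m ≥ 2` the cuspidal matrix problem `MP_cp(m,m)` has no simple
objects: every object `(M₁₁, M₁₂, M₂₂)` admits a non-scalar endomorphism. -/
theorem cuspidal_no_simple_objects (m : ℕ) (hm : 2 ≤ m)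
    (M₁₁ M₁₂ M₂₂ : Matrix (Fin m) (Fin m) ℂ) :
    ∃ (S₁₁ S₂₁ S₂₂ : Matrix (Fin m) (Fin m) ℂ),
      S₁₁ * M₁₁ = M₁₁ * S₁₁ + M₁₂ * S₂₁ ∧
      S₁₁ * M₁₂ = M₁₂ * S₂₂ ∧
      S₂₁ * M₁₂ + S₂₂ * M₂₂ = M₂₂ * S₂₂ ∧
      ¬ ∃ c : ℂ, S₁₁ = c • (1 : Matrix (Fin m) (Fin m) ℂ) ∧
          S₂₂ = c • (1 : Matrix (Fin m) (Fin m) ℂ) ∧ S₂₁ = 0 := by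
  by_cases hdet : IsUnit M₁₂.det
  · -- invertible case
    set N := M₁₂⁻¹ with hN
    have hMN : M₁₂ * N = 1 := Matrix.mul_nonsing_inv _ hdet
    have hNM : N * M₁₂ = 1 := Matrix.nonsing_inv_mul _ hdet
    set A := N * M₁₁ * M₁₂ with hA
    obtain ⟨U, hUB, hUns⟩ := exists_nonscalar_commuting m hm (A + M₂₂)
    set S₁₁ := M₁₂ * U * N with hS11
    set S₂₂ := U with hS22
    set S₂₁ := N * (S₁₁ * M₁₁ - M₁₁ * S₁₁) with hS21
    refine ⟨S₁₁, S₂₁, S₂₂, ?_, ?_, ?_, ?_⟩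
    · -- eq1
      have : M₁₂ * S₂₁ = S₁₁ * M₁₁ - M₁₁ * S₁₁ := by
        rw [hS21, ← Matrix.mul_assoc, hMN, Matrix.one_mul]
      rw [this]; abel
    · -- eq2
      rw [hS11, Matrix.mul_assoc, Matrix.mul_assoc, hNM, Matrix.mul_one]
    · -- eq3
      have hNS : N * S₁₁ = U * N := by
        rw [hS11, hS22, ← Matrix.mul_assoc, ← Matrix.mul_assoc, hNM, Matrix.one_mul]
      have hSM : S₁₁ * M₁₂ = M₁₂ * U := by
        rw [hS11, hS22, Matrix.mul_assoc, hNM, Matrix.mul_one]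
      have h1 : S₂₁ * M₁₂ = U * A - A * U := by
        have e : S₂₁ * M₁₂ = N * S₁₁ * (M₁₁ * M₁₂) - N * M₁₁ * (S₁₁ * M₁₂) := by
          rw [hS21]; noncomm_ring
        rw [e, hNS, hSM, hA]; noncomm_ring
      have hUB' : U * A + U * M₂₂ = A * U + M₂₂ * U := by
        have := hUB
        rwa [Matrix.mul_add, Matrix.add_mul] at this
      calc S₂₁ * M₁₂ + S₂₂ * M₂₂ = (U * A + U * M₂₂) - A * U := by rw [h1]; abel
        _ = (A * U + M₂₂ * U) - A * U := by rw [hUB']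
        _ = M₂₂ * S₂₂ := by rw [hS22]; abel
    · rintro ⟨c, _, hc2, _⟩
      exact hUns ⟨c, hc2⟩
  · -- singular case
    have hdet0 : M₁₂.det = 0 := by
      by_contra h
      exact hdet (isUnit_iff_ne_zero.mpr h)
    obtain ⟨v, hv, hMv⟩ := Matrix.exists_mulVec_eq_zero_iff.mpr hdet0
    obtain ⟨w, hw, hwM⟩ := Matrix.exists_vecMul_eq_zero_iff.mpr hdet0
    set S₂₁ : Matrix (Fin m) (Fin m) ℂ := Matrix.of (fun i j => v i * w j) with hS21
    refine ⟨0, S₂₁, 0, ?_, ?_, ?_, ?_⟩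
    · -- M₁₂ * S₂₁ = 0
      have : M₁₂ * S₂₁ = 0 := by
        ext i j
        have hMvi : M₁₂.mulVec v i = 0 := by rw [hMv]; rfl
        simp only [Matrix.mul_apply, hS21, Matrix.of_apply, Matrix.zero_apply]
        calc ∑ k, M₁₂ i k * (v k * w j) = (∑ k, M₁₂ i k * v k) * w j := by
              rw [Finset.sum_mul]; congr 1; ext k; ring
          _ = 0 := by
              have : (∑ k, M₁₂ i k * v k) = M₁₂.mulVec v i := rfl
              rw [this, hMvi, zero_mul]
      simp [this]
    · simp
    · -- S₂₁ * M₁₂ = 0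
      have : S₂₁ * M₁₂ = 0 := by
        ext i j
        have hwMj : Matrix.vecMul w M₁₂ j = 0 := by rw [hwM]; rfl
        simp only [Matrix.mul_apply, hS21, Matrix.of_apply, Matrix.zero_apply]
        calc ∑ k, v i * w k * M₁₂ k j = v i * ∑ k, w k * M₁₂ k j := by
              rw [Finset.mul_sum]; congr 1; ext k; ring
          _ = 0 := by
              have : (∑ k, w k * M₁₂ k j) = Matrix.vecMul w M₁₂ j := rfl
              rw [this, hwMj, mul_zero]
      simp [this]
    · rintro ⟨c, _, _, hc3⟩
      obtain ⟨i, hvi⟩ := Function.ne_iff.mp hv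
      obtain ⟨j, hwj⟩ := Function.ne_iff.mp hw
      have := congrArg (fun M => M i j) hc3
      simp only [hS21, Matrix.of_apply, Matrix.zero_apply] at this
      exact (mul_ne_zero hvi hwj) this
end
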